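/- arXiv:2407.05227 — 7 statements merged into one kernel-verified Lean document; each statement's English description precedes it below -/
import Mathlib

section
/- Let X be a real Banach space, Δ a nonempty subset of X, F a set-valued mapping from Δ into X, and (x, y) a point with x ∈ Δ and y ∈ F(x). Then the set F(D̂*F(x,y)) of all fixed points of the Mordukhovich differential operator D̂*F(x,y) is a convex subset of X* and is closed with respect to the dual norm on X*. -/
/-- The set of fixed points of the Mordukhovich differential operator `D̂*F(x,y)`
of a set-valued mapping `F : Δ ⇉ X` at a graph point `(x, y)`:  a functional
`y*` is a fixed point iff `y* ∈ D̂*F(x,y)(y*)`. -/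
def mordFixedPoints {X : Type*} [NormedAddCommGroup X] [NormedSpace ℝ X]
    (Δ : Set X) (F : X → Set X) (x y : X) : Set (X →L[ℝ] ℝ) :=
  {y' | ∀ ε > (0 : ℝ), ∃ δ > (0 : ℝ), ∀ u ∈ Δ, ∀ v ∈ F u,
      ‖u - x‖ + ‖v - y‖ < δ →
        y' (u - x) - y' (v - y) ≤ ε * (‖u - x‖ + ‖v - y‖)}

/-- For a set-valued mapping `F` from a nonempty subset `Δ` of a real
Banach space `X` into `X` and a graph point `(x, y)`, the set of fixed points of the
Mordukhovich differential operator `D̂*F(x,y)` is a convex subset of `X*` which is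
closed with respect to the dual norm. -/
theorem mordFixedPoints_convex_isClosed
    {X : Type*} [NormedAddCommGroup X] [NormedSpace ℝ X] [CompleteSpace X]
    (Δ : Set X) (hΔ : Δ.Nonempty) (F : X → Set X)
    (x : X) (hx : x ∈ Δ) (y : X) (hy : y ∈ F x) :
    Convex ℝ (mordFixedPoints Δ F x y) ∧ IsClosed (mordFixedPoints Δ F x y) := by
  constructor
  · intro p hp q hq a b ha hb hab ε hε
    obtain ⟨δ1, hδ1, h1⟩ := hp ε hε
    obtain ⟨δ2, hδ2, h2⟩ := hq ε hε
    refine ⟨min δ1 δ2, lt_min hδ1 hδ2, ?_⟩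
    intro u hu v hv hs
    have H1 := h1 u hu v hv (hs.trans_le (min_le_left _ _))
    have H2 := h2 u hu v hv (hs.trans_le (min_le_right _ _))
    simp only [ContinuousLinearMap.add_apply, ContinuousLinearMap.coe_smul',
      Pi.smul_apply, smul_eq_mul]
    have key := add_le_add (mul_le_mul_of_nonneg_left H1 ha)
      (mul_le_mul_of_nonneg_left H2 hb)
    have eq1 : a * (ε * (‖u - x‖ + ‖v - y‖)) + b * (ε * (‖u - x‖ + ‖v - y‖))
        = ε * (‖u - x‖ + ‖v - y‖) := by rw [← add_mul, hab, one_mul]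
    linarith
  · refine isClosed_of_closure_subset ?_
    intro p hp ε hε
    obtain ⟨q, hq, hpq⟩ := Metric.mem_closure_iff.mp hp (ε / 2) (by linarith)
    obtain ⟨δ, hδ, h⟩ := hq (ε / 2) (by linarith)
    refine ⟨δ, hδ, ?_⟩
    intro u hu v hv hs
    have H := h u hu v hv hs
    have hnorm : ‖p - q‖ < ε / 2 := by rw [← dist_eq_norm]; exact hpq
    have b1 : |(p - q) (u - x)| ≤ ‖p - q‖ * ‖u - x‖ := by
      simpa [Real.norm_eq_abs] using (p - q).le_opNorm (u - x)
    have b2 : |(p - q) (v - y)| ≤ ‖p - q‖ * ‖v - y‖ := by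
      simpa [Real.norm_eq_abs] using (p - q).le_opNorm (v - y)
    have e1 : (p - q) (u - x) = p (u - x) - q (u - x) := by simp
    have e2 : (p - q) (v - y) = p (v - y) - q (v - y) := by simp
    have n1 : (0:ℝ) ≤ ‖u - x‖ := norm_nonneg _
    have n2 : (0:ℝ) ≤ ‖v - y‖ := norm_nonneg _
    have a1 := le_abs_self ((p - q) (u - x))
    have a2 := neg_abs_le ((p - q) (v - y))
    nlinarith [norm_nonneg (p - q)]
end

section
/- Let H be a real Hilbert space, r > 0, and let P : H → H be the metric projection onto the closed ball of radius r centered at the origin, given by P(x) = x if ‖x‖ ≤ r and P(x) = (r/‖x‖)·x if ‖x‖ > r. Then for every x ∈ H with ‖x‖ > r, the only fixed point of the Mordukhovich differential operator D̂*P(x) is 0; that is, y ∈ H satisfies y ∈ D̂*P(x)(y) if and only if y = 0. -/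
open scoped RealInnerProductSpace

set_option maxHeartbeats 1600000 in
/-- Let `H` be a real Hilbert space, `r > 0`, and `P` the metric
projection onto the closed ball of radius `r` centered at the origin:
`P x = x` if `‖x‖ ≤ r` and `P x = (r/‖x‖) • x` otherwise.  Then for every `x` with
`‖x‖ > r`, the only fixed point of the Mordukhovich differential operator `D̂*P(x)`
is `0`: `y ∈ D̂*P(x)(y)` iff `y = 0`. -/
theorem mordFixedPoint_ball_projection_exterior
    {H : Type*} [NormedAddCommGroup H] [InnerProductSpace ℝ H] [CompleteSpace H]
    (r : ℝ) (hr : 0 < r) (P : H → H)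
    (hP : ∀ u, P u = if ‖u‖ ≤ r then u else (r / ‖u‖) • u)
    (x : H) (hx : r < ‖x‖) :
    ∀ y : H,
      ((∀ ε > (0 : ℝ), ∃ δ > (0 : ℝ), ∀ u : H, ‖u - x‖ < δ →
          ⟪y, u - x⟫ - ⟪y, P u - P x⟫ ≤ ε * (‖u - x‖ + ‖P u - P x‖))
        ↔ y = 0) := by
  intro y
  have hx0 : (0:ℝ) < ‖x‖ := hr.trans hx
  have hPx : P x = (r / ‖x‖) • x := by
    rw [hP, if_neg (not_le.mpr hx)]
  constructor
  · intro hD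
    by_contra hy
    have hy0 : (0:ℝ) < ‖y‖ := norm_pos_iff.mpr hy
    have hrx : r / ‖x‖ < 1 := (div_lt_one hx0).mpr hx
    have hrx0 : (0:ℝ) < r / ‖x‖ := by positivity
    -- Step 1: y is orthogonal to x
    have key : ∀ ε > (0:ℝ), |⟪y, x⟫| ≤ ε * ‖x‖ := by
      intro ε hε
      obtain ⟨δ, hδ, hδ'⟩ := hD ε hε
      set t : ℝ := min (δ / (2 * ‖x‖)) ((1 - r / ‖x‖) / 2) with htdef
      have ht0 : 0 < t := lt_min (by positivity) (by linarith)
      have ht1 : t < 1 := lt_of_le_of_lt (min_le_right _ _) (by linarith [hrx0])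
      have ht2 : t ≤ (1 - r / ‖x‖) / 2 := min_le_right _ _
      have htδ : t * ‖x‖ < δ := by
        have h3 : t ≤ δ / (2 * ‖x‖) := min_le_left _ _
        have : t * ‖x‖ ≤ δ / (2 * ‖x‖) * ‖x‖ := by nlinarith
        have h4 : δ / (2 * ‖x‖) * ‖x‖ = δ / 2 := by field_simp
        linarith [h4 ▸ this]
      have main : ∀ s : ℝ, |s| = t → s * ⟪y, x⟫ ≤ ε * (t * ‖x‖) := by
        intro s hs
        have hsabs : |s| < 1 := hs ▸ ht1
        have hs1 : (0:ℝ) < 1 + s := by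
          have := abs_lt.mp hsabs
          linarith [this.1]
        have hsr : r < ‖(1 + s) • x‖ := by
          rw [norm_smul, Real.norm_eq_abs, abs_of_pos hs1]
          have hns : -t ≤ s := by
            have := neg_abs_le s
            rw [hs] at this; exact this
          have h5 : r / ‖x‖ < 1 + s := by nlinarith
          calc r = (r / ‖x‖) * ‖x‖ := by field_simp
            _ < (1 + s) * ‖x‖ := by nlinarith
        have hPu : P ((1 + s) • x) = P x := by
          rw [hP, if_neg (not_le.mpr hsr), hPx, norm_smul, Real.norm_eq_abs,
            abs_of_pos hs1, smul_smul]
          congr 1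
          field_simp
        have hux : (1 + s) • x - x = s • x := by
          rw [add_smul, one_smul]; abel
        have h6 := hδ' ((1 + s) • x)
          (by rw [hux, norm_smul, Real.norm_eq_abs, hs]; exact htδ)
        rw [hPu, sub_self, hux, norm_smul, Real.norm_eq_abs, hs] at h6
        simpa [real_inner_smul_right] using h6
      have h1 := main t (abs_of_pos ht0)
      have h2 := main (-t) (by rw [abs_neg, abs_of_pos ht0])
      rw [abs_le]
      constructor
      · nlinarith
      · nlinarith
    have hyx : ⟪y, x⟫ = 0 := by
      by_contra hne
      have habs : (0:ℝ) < |⟪y, x⟫| := abs_pos.mpr hne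
      have := key (|⟪y, x⟫| / (2 * ‖x‖)) (by positivity)
      have h7 : |⟪y, x⟫| / (2 * ‖x‖) * ‖x‖ = |⟪y, x⟫| / 2 := by field_simp
      rw [h7] at this
      linarith
    -- Step 2: derive contradiction
    set κ : ℝ := 1 - r / ‖x‖ with hκdef
    have hκ : 0 < κ := by simp only [hκdef]; linarith
    have key2 : ∀ ε > (0:ℝ), κ * ‖y‖ ≤ 3 * ε := by
      intro ε hε
      obtain ⟨δ, hδ, hδ'⟩ := hD ε hε
      set t : ℝ := δ / (2 * ‖y‖) with htdef
      have ht0 : 0 < t := by positivity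
      have htδ : t * ‖y‖ < δ := by
        have : t * ‖y‖ = δ / 2 := by rw [htdef]; field_simp
        linarith
      obtain ⟨u, hudef⟩ : ∃ u : H, u = x + t • y := ⟨_, rfl⟩
      have hux : u - x = t • y := by rw [hudef]; abel
      have hnux : ‖u - x‖ = t * ‖y‖ := by
        rw [hux, norm_smul, Real.norm_eq_abs, abs_of_pos ht0]
      have hxy : ⟪x, y⟫ = 0 := by rw [real_inner_comm]; exact hyx
      have hu2 : ‖u‖ ^ 2 = ‖x‖ ^ 2 + t ^ 2 * ‖y‖ ^ 2 := by
        rw [hudef, norm_add_sq_real, real_inner_smul_right, hxy, norm_smul,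
          Real.norm_eq_abs, abs_of_pos ht0]
        ring
      have hxu : ‖x‖ ≤ ‖u‖ := by
        nlinarith [norm_nonneg u, norm_nonneg x, sq_nonneg (t * ‖y‖)]
      have hru : r < ‖u‖ := lt_of_lt_of_le hx hxu
      have hu0 : (0:ℝ) < ‖u‖ := hr.trans hru
      have hPu : P u = (r / ‖u‖) • u := by rw [hP, if_neg (not_le.mpr hru)]
      -- inner products
      have hyu : ⟪y, u⟫ = t * ‖y‖ ^ 2 := by
        rw [hudef, inner_add_right, real_inner_smul_right, hyx, real_inner_self_eq_norm_sq]
        ring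
      have hinner1 : ⟪y, u - x⟫ = t * ‖y‖ ^ 2 := by
        rw [hux, real_inner_smul_right, real_inner_self_eq_norm_sq]
      have hinner2 : ⟪y, P u - P x⟫ = (r / ‖u‖) * (t * ‖y‖ ^ 2) := by
        rw [hPu, hPx, inner_sub_right, real_inner_smul_right, real_inner_smul_right,
          hyu, hyx]
        ring
      -- bound on ‖P u - P x‖
      have hdecomp : P u - P x = (r / ‖u‖) • (u - x) + ((r / ‖u‖) - (r / ‖x‖)) • x := by
        rw [hPu, hPx, smul_sub, sub_smul]
        abel
      have hbound : ‖P u - P x‖ ≤ 2 * (t * ‖y‖) := by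
        rw [hdecomp]
        have hA : ‖(r / ‖u‖) • (u - x)‖ ≤ t * ‖y‖ := by
          rw [norm_smul, Real.norm_eq_abs, abs_of_pos (by positivity : (0:ℝ) < r / ‖u‖),
            hnux]
          have h1 : r / ‖u‖ ≤ 1 := (div_le_one hu0).mpr hru.le
          nlinarith [mul_pos ht0 hy0]
        have hB : ‖((r / ‖u‖) - (r / ‖x‖)) • x‖ ≤ t * ‖y‖ := by
          rw [norm_smul, Real.norm_eq_abs]
          have hle : r / ‖u‖ ≤ r / ‖x‖ := by
            apply div_le_div_of_nonneg_left hr.le hx0 hxu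
          rw [abs_of_nonpos (by linarith)]
          have hexp : -(r / ‖u‖ - r / ‖x‖) * ‖x‖ = r * (‖u‖ - ‖x‖) / ‖u‖ := by
            field_simp
            ring
          rw [hexp]
          have h8 : ‖u‖ - ‖x‖ ≤ ‖u - x‖ := by
            have := norm_sub_norm_le u x
            linarith [le_abs_self (‖u‖ - ‖x‖), this]
          have h9 : r / ‖u‖ ≤ 1 := (div_le_one hu0).mpr hru.le
          have h10 : 0 ≤ ‖u‖ - ‖x‖ := by linarith
          calc r * (‖u‖ - ‖x‖) / ‖u‖ = (r / ‖u‖) * (‖u‖ - ‖x‖) := by ring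
            _ ≤ 1 * (‖u‖ - ‖x‖) := by nlinarith
            _ = ‖u‖ - ‖x‖ := by ring
            _ ≤ ‖u - x‖ := h8
            _ = t * ‖y‖ := hnux
        calc ‖(r / ‖u‖) • (u - x) + ((r / ‖u‖) - (r / ‖x‖)) • x‖
            ≤ ‖(r / ‖u‖) • (u - x)‖ + ‖((r / ‖u‖) - (r / ‖x‖)) • x‖ := norm_add_le _ _
          _ ≤ 2 * (t * ‖y‖) := by linarith
      have hmain := hδ' u (by rw [hnux]; exact htδ)
      rw [hinner1, hinner2, hnux] at hmain
      -- t‖y‖²(1 - r/‖u‖) ≤ ε (t‖y‖ + ‖Pu - Px‖) ≤ 3 ε t ‖y‖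
      have hκu : κ ≤ 1 - r / ‖u‖ := by
        have : r / ‖u‖ ≤ r / ‖x‖ := div_le_div_of_nonneg_left hr.le hx0 hxu
        simp only [hκdef]; linarith
      have e1 : κ * (t * ‖y‖ ^ 2) ≤ (1 - r / ‖u‖) * (t * ‖y‖ ^ 2) :=
        mul_le_mul_of_nonneg_right hκu (by positivity)
      have e3 : ε * (t * ‖y‖ + ‖P u - P x‖) ≤ ε * (t * ‖y‖ + 2 * (t * ‖y‖)) := by
        apply mul_le_mul_of_nonneg_left _ hε.le
        linarith
      have hfinal : κ * (t * ‖y‖ ^ 2) ≤ 3 * ε * (t * ‖y‖) := by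
        calc κ * (t * ‖y‖ ^ 2) ≤ (1 - r / ‖u‖) * (t * ‖y‖ ^ 2) := e1
          _ = t * ‖y‖ ^ 2 - r / ‖u‖ * (t * ‖y‖ ^ 2) := by ring
          _ ≤ ε * (t * ‖y‖ + ‖P u - P x‖) := hmain
          _ ≤ ε * (t * ‖y‖ + 2 * (t * ‖y‖)) := e3
          _ = 3 * ε * (t * ‖y‖) := by ring
      have ht' : 0 < t * ‖y‖ := by positivity
      have h11 : κ * ‖y‖ * (t * ‖y‖) ≤ 3 * ε * (t * ‖y‖) := by
        calc κ * ‖y‖ * (t * ‖y‖) = κ * (t * ‖y‖ ^ 2) := by ring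
          _ ≤ 3 * ε * (t * ‖y‖) := hfinal
      exact le_of_mul_le_mul_right h11 ht'
    have := key2 (κ * ‖y‖ / 6) (by positivity)
    nlinarith
  · intro h
    subst h
    intro ε hε
    refine ⟨1, one_pos, fun u hu => ?_⟩
    simp only [inner_zero_left, sub_zero]
    positivity
end

section
/- Let (S, 𝒜, μ) be a measure space and 1 < p < ∞ with conjugate exponent q (1/p + 1/q = 1). Let f ∈ L^p(μ) satisfy f ≥ 0 μ-almost everywhere and f ≠ 0, and let φ ∈ L^q(μ) be the normalized duality mapping value J(f), i.e. φ = f^{p−1}/‖f‖_p^{p−2} μ-almost everywhere. Then J(f) is a fixed point of the Mordukhovich differential operator D̂*P_{K_p}(f) of the metric projection P_{K_p}(u) = u⁺ onto the positive cone K_p: for every ε > 0 there exists δ > 0 such that for every u ∈ L^p(μ) with ‖u − f‖_p + ‖u⁺ − f‖_p < δ, one has ∫_S φ·((u − f) − (u⁺ − f)) dμ ≤ ε·(‖u − f‖_p + ‖u⁺ − f‖_p). -/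
open MeasureTheory
open scoped ENNReal

/-- Let `(S, 𝒜, μ)` be a measure space and `1 < p < ∞` with conjugate
exponent `q`.  Let `f ∈ Lᵖ(μ)` with `f ≥ 0` a.e. and `f ≠ 0`, and let `φ ∈ L^q(μ)`
be the normalized duality mapping value `J(f)`, i.e.
`φ = f^(p-1)/‖f‖ₚ^(p-2)` a.e.  Then `J(f)` is a fixed point of the Mordukhovich
differential operator `D̂*P_{K_p}(f)` of the metric projection `u ↦ u⁺` onto the
positive cone. -/
theorem dualityMap_mem_coderivative_posPart
    {S : Type*} [MeasurableSpace S] (μ : Measure S)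
    (p q : ℝ≥0∞) (hp : 1 < p) (hp' : p ≠ ⊤) (hpq : 1 / p + 1 / q = 1)
    (f : Lp ℝ p μ) (hf : 0 ≤ᵐ[μ] (f : S → ℝ)) (hf0 : f ≠ 0)
    (φ : Lp ℝ q μ)
    (hφ : ∀ᵐ s ∂μ, φ s = f s ^ (p.toReal - 1) / ‖f‖ ^ (p.toReal - 2)) :
    ∀ ε > (0 : ℝ), ∃ δ > (0 : ℝ), ∀ u : Lp ℝ p μ,
      ‖u - f‖ + ‖Lp.posPart u - f‖ < δ →
        (∫ s, φ s * ((u s - f s) - (Lp.posPart u s - f s)) ∂μ)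
          ≤ ε * (‖u - f‖ + ‖Lp.posPart u - f‖) := by
  have : Fact (1 ≤ p) := ⟨hp.le⟩
  intro ε hε
  refine ⟨1, one_pos, fun u _ => ?_⟩
  have hphi : 0 ≤ᵐ[μ] (φ : S → ℝ) := by
    filter_upwards [hφ, hf] with s h1 h2
    rw [h1]
    exact div_nonneg (Real.rpow_nonneg h2 _) (Real.rpow_nonneg (norm_nonneg f) _)
  have hint : (∫ s, φ s * ((u s - f s) - (Lp.posPart u s - f s)) ∂μ) ≤ 0 := by
    apply integral_nonpos_of_ae
    filter_upwards [hphi, Lp.coeFn_posPart u] with s h1 h2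
    have : u s - Lp.posPart u s ≤ 0 := by
      rw [h2]; simp [sub_nonpos, le_max_left]
    have heq : (u s - f s) - (Lp.posPart u s - f s) = u s - Lp.posPart u s := by ring
    rw [heq]
    exact mul_nonpos_of_nonneg_of_nonpos h1 this
  exact hint.trans (mul_nonneg hε.le (add_nonneg (norm_nonneg _) (norm_nonneg _)))
end

section
/- Let (S, 𝒜, μ) be a measure space and 1 < p < ∞ with conjugate exponent q (1/p + 1/q = 1). Then every ψ ∈ L^q(μ) with ψ ≥ 0 μ-almost everywhere is a fixed point of the Mordukhovich differential operator D̂*P_{K_p}(0) of the metric projection P_{K_p}(u) = u⁺ onto the positive cone K_p at the origin: for every ε > 0 there exists δ > 0 such that for every u ∈ L^p(μ) with ‖u‖_p + ‖u⁺‖_p < δ, one has ∫_S ψ·(u − u⁺) dμ ≤ ε·(‖u‖_p + ‖u⁺‖_p). -/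
open MeasureTheory
open scoped ENNReal

/-- Let `(S, 𝒜, μ)` be a measure space and `1 < p < ∞` with conjugate
exponent `q`.  Then every `ψ ∈ L^q(μ)` with `ψ ≥ 0` a.e. is a fixed point of the
Mordukhovich differential operator `D̂*P_{K_p}(0)` of the metric projection
`u ↦ u⁺` onto the positive cone, at the origin. -/
theorem nonneg_mem_coderivative_posPart_zero
    {S : Type*} [MeasurableSpace S] (μ : Measure S)
    (p q : ℝ≥0∞) (hp : 1 < p) (hp' : p ≠ ⊤) (hpq : 1 / p + 1 / q = 1)
    (ψ : Lp ℝ q μ) (hψ : 0 ≤ᵐ[μ] (ψ : S → ℝ)) :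
    ∀ ε > (0 : ℝ), ∃ δ > (0 : ℝ), ∀ u : Lp ℝ p μ,
      ‖u‖ + ‖Lp.posPart u‖ < δ →
        (∫ s, ψ s * (u s - Lp.posPart u s) ∂μ)
          ≤ ε * (‖u‖ + ‖Lp.posPart u‖) := by
  haveI : Fact (1 ≤ p) := ⟨hp.le⟩
  intro ε hε
  refine ⟨1, one_pos, fun u _ => ?_⟩
  have h1 : (∫ s, ψ s * (u s - Lp.posPart u s) ∂μ) ≤ 0 := by
    apply integral_nonpos_of_ae
    filter_upwards [hψ, Lp.coeFn_posPart u] with s hs hpos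
    rw [hpos]
    exact mul_nonpos_of_nonneg_of_nonpos hs (by simp [le_max_left])
  have h2 : 0 ≤ ε * (‖u‖ + ‖Lp.posPart u‖) :=
    mul_nonneg hε.le (add_nonneg (norm_nonneg u) (norm_nonneg (Lp.posPart u)))
  linarith
end

section
/- Let ℓ² be the real Hilbert space of square-summable sequences indexed by ℕ, and let P : ℓ² → ℓ² be the metric projection onto the positive cone, given coordinatewise by (P x)_i = max(x_i, 0). Let M be a nonempty finite subset of ℕ with complement M̄, and let x̄ ∈ ℓ² satisfy x̄_i > 0 for all i ∈ M and x̄_i = 0 for all i ∈ M̄. Then the fixed-point set of the Mordukhovich differential operator D̂*P(x̄) is exactly K_{M̄} = {y ∈ ℓ² : y_i ≥ 0 for all i ∈ M̄}; that is, y ∈ ℓ² satisfies y ∈ D̂*P(x̄)(y) if and only if y_i ≥ 0 for every i ∉ M. -/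
open Filter Topology
open scoped RealInnerProductSpace

/-!
Near `x̄` the coordinates in `M` stay positive, so `u - P u = min u 0` vanishes on `M`, while
`x̄ - P x̄ = 0`. Hence `⟪y, u - x̄⟫ - ⟪y, P u - P x̄⟫ = ⟪y, min u 0⟫ ≤ 0` as soon as `y ≥ 0` off `M`.
Conversely, if `y j < 0` for some `j ∉ M`, then moving from `x̄` by `-t e_j` leaves `P` unchanged
while that quantity equals `-t y j`, which is of first order in `t = ‖u - x̄‖`.
-/

section FixedPoint

variable {E : Type*} [NormedAddCommGroup E] [InnerProductSpace ℝ E]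

/-- `y ∈ D̂*P(x)(y)` for the Mordukhovich differential operator `D̂*P(x)`. -/
def IsMordFixedPoint (P : E → E) (x y : E) : Prop :=
  ∀ ε > (0 : ℝ), ∃ δ > (0 : ℝ), ∀ u, ‖u - x‖ < δ →
    ⟪y, u - x⟫ - ⟪y, P u - P x⟫ ≤ ε * (‖u - x‖ + ‖P u - P x‖)

variable {P : E → E} {x y : E}

theorem isMordFixedPoint_of_eventually_inner_le
    (h : ∀ᶠ u in 𝓝 x, ⟪y, u - x⟫ ≤ ⟪y, P u - P x⟫) : IsMordFixedPoint P x y := by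
  intro ε hε
  obtain ⟨δ, hδ, hball⟩ := Metric.eventually_nhds_iff.1 h
  refine ⟨δ, hδ, fun u hu => ?_⟩
  have hle := hball (by rwa [dist_eq_norm])
  have : 0 ≤ ε * (‖u - x‖ + ‖P u - P x‖) := by positivity
  linarith

theorem IsMordFixedPoint.inner_nonpos_of_eventually_eq (h : IsMordFixedPoint P x y) {v : E}
    (hv : ∀ᶠ t in 𝓝[>] (0 : ℝ), P (x + t • v) = P x) : ⟪y, v⟫ ≤ 0 := by
  by_contra! hyv
  have hv0 : 0 < ‖v‖ := norm_pos_iff.2 (by rintro rfl; simp at hyv)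
  obtain ⟨δ, hδ, hball⟩ := h (⟪y, v⟫ / (2 * ‖v‖)) (by positivity)
  have hsmall : ∀ᶠ t in 𝓝[>] (0 : ℝ), 0 < t ∧ t < δ / ‖v‖ :=
    eventually_mem_nhdsWithin.and <|
      eventually_nhdsWithin_of_eventually_nhds (eventually_lt_nhds (by positivity))
  obtain ⟨t, hPt, ht, htδ⟩ := (hv.and hsmall).exists
  have key := hball (x + t • v) (by
    rw [add_sub_cancel_left, norm_smul, Real.norm_of_nonneg ht.le]
    exact (lt_div_iff₀ hv0).1 htδ)
  rw [hPt, add_sub_cancel_left, sub_self, inner_zero_right, sub_zero, norm_zero, add_zero,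
    inner_smul_right, norm_smul, Real.norm_of_nonneg ht.le] at key
  have : t * ⟪y, v⟫ ≤ t * ⟪y, v⟫ / 2 :=
    calc t * ⟪y, v⟫ ≤ ⟪y, v⟫ / (2 * ‖v‖) * (t * ‖v‖) := key
      _ = t * ⟪y, v⟫ / 2 := by field_simp
  nlinarith

end FixedPoint

local notation "ℓ²" => lp (fun _ : ℕ => ℝ) 2

section PositivePart

variable {P : ℓ² → ℓ²}

theorem posProj_eq_self (hP : ∀ u i, P u i = max (u i) 0) {x : ℓ²} (hx : ∀ i, 0 ≤ x i) :
    P x = x :=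
  lp.ext <| funext fun i => (hP x i).trans (max_eq_left (hx i))

theorem posProj_add_smul_single_neg_one (hP : ∀ u i, P u i = max (u i) 0) {x : ℓ²} {j : ℕ}
    (hxj : x j = 0) {t : ℝ} (ht : 0 ≤ t) : P (x + t • lp.single 2 j (-1)) = P x := by
  refine lp.ext <| funext fun i => ?_
  rw [hP, hP, lp.coeFn_add, lp.coeFn_smul, Pi.add_apply, Pi.smul_apply, smul_eq_mul]
  rcases eq_or_ne i j with rfl | hij
  · rw [lp.single_apply_self, hxj]
    simp [ht]
  · rw [lp.single_apply_ne _ _ _ hij, mul_zero, add_zero]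

theorem inner_sub_posProj_nonpos (hP : ∀ u i, P u i = max (u i) 0) {u y : ℓ²}
    (h : ∀ i, 0 ≤ u i ∨ 0 ≤ y i) : ⟪y, u - P u⟫ ≤ 0 := by
  rw [lp.inner_eq_tsum]
  refine tsum_nonpos fun i => ?_
  rw [lp.coeFn_sub, Pi.sub_apply, hP, Real.inner_apply]
  rcases h i with hu | hy
  · simp [max_eq_left hu]
  · exact mul_nonpos_of_nonneg_of_nonpos hy (by simp)

end PositivePart

theorem mordFixedPoints_positive_cone_l2_general
    (P : lp (fun _ : ℕ => ℝ) 2 → lp (fun _ : ℕ => ℝ) 2)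
    (hP : ∀ u i, P u i = max (u i) 0)
    (M : Finset ℕ)
    (xbar : lp (fun _ : ℕ => ℝ) 2)
    (hpos : ∀ i ∈ M, 0 < xbar i) (hzero : ∀ i ∉ M, xbar i = 0) :
    ∀ y : lp (fun _ : ℕ => ℝ) 2,
      ((∀ ε > (0 : ℝ), ∃ δ > (0 : ℝ), ∀ u, ‖u - xbar‖ < δ →
          ⟪y, u - xbar⟫ - ⟪y, P u - P xbar⟫ ≤ ε * (‖u - xbar‖ + ‖P u - P xbar‖))
        ↔ ∀ i ∉ M, 0 ≤ y i) := by
  intro y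
  change IsMordFixedPoint P xbar y ↔ _
  refine ⟨fun hfix j hj => ?_, fun hy => isMordFixedPoint_of_eventually_inner_le ?_⟩
  · have := hfix.inner_nonpos_of_eventually_eq <| eventually_nhdsWithin_of_forall fun t ht =>
      posProj_add_smul_single_neg_one hP (hzero j hj) (le_of_lt ht)
    simpa [lp.inner_single_right] using this
  · have hPx : P xbar = xbar := posProj_eq_self hP fun i => by
      by_cases hi : i ∈ M
      exacts [(hpos i hi).le, (hzero i hi).ge]
    have hnear : ∀ᶠ u in 𝓝 xbar, ∀ i ∈ M, 0 < u i :=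
      (eventually_all_finset M).2 fun i hi =>
        (lp.evalCLM ℝ _ 2 i).continuous.continuousAt.eventually (eventually_gt_nhds (hpos i hi))
    filter_upwards [hnear] with u hu
    have hsign : ∀ i, 0 ≤ u i ∨ 0 ≤ y i := fun i => by
      by_cases hi : i ∈ M
      exacts [.inl (hu i hi).le, .inr (hy i hi)]
    calc ⟪y, u - xbar⟫ = ⟪y, u - P u⟫ + ⟪y, P u - P xbar⟫ := by
          rw [← inner_add_right, hPx, sub_add_sub_cancel]
      _ ≤ ⟪y, P u - P xbar⟫ := by linarith [inner_sub_posProj_nonpos hP hsign]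

/-- Let `ℓ²` be the real Hilbert space of square-summable sequences
and `P : ℓ² → ℓ²` the metric projection onto the positive cone, given coordinatewise
by `(P x) i = max (x i) 0`.  Let `M` be a nonempty finite subset of `ℕ` and let `x̄`
satisfy `x̄ i > 0` for `i ∈ M` and `x̄ i = 0` for `i ∉ M`.  Then the fixed-point set
of the Mordukhovich differential operator `D̂*P(x̄)` is exactly
`K_M̄ = {y : y i ≥ 0 for all i ∉ M}`. -/
theorem mordFixedPoints_positive_cone_l2
    (P : lp (fun _ : ℕ => ℝ) 2 → lp (fun _ : ℕ => ℝ) 2)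
    (hP : ∀ u i, P u i = max (u i) 0)
    (M : Finset ℕ) (hM : M.Nonempty)
    (xbar : lp (fun _ : ℕ => ℝ) 2)
    (hpos : ∀ i ∈ M, 0 < xbar i) (hzero : ∀ i ∉ M, xbar i = 0) :
    ∀ y : lp (fun _ : ℕ => ℝ) 2,
      ((∀ ε > (0 : ℝ), ∃ δ > (0 : ℝ), ∀ u, ‖u - xbar‖ < δ →
          ⟪y, u - xbar⟫ - ⟪y, P u - P xbar⟫ ≤ ε * (‖u - xbar‖ + ‖P u - P xbar‖))
        ↔ ∀ i ∉ M, 0 ≤ y i) :=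
  mordFixedPoints_positive_cone_l2_general P hP M xbar hpos hzero
end

section
/- Let ℓ¹ be the real Banach space of absolutely summable sequences with norm ‖·‖₁, let r > 0, and let P_{rB} be the set-valued metric projection onto the closed ball rB = {w ∈ ℓ¹ : ‖w‖₁ ≤ r}: v ∈ P_{rB}(u) if and only if ‖v‖₁ ≤ r and ‖u − v‖₁ ≤ ‖u − w‖₁ for all w with ‖w‖₁ ≤ r. Let x ∈ ℓ¹ with ‖x‖₁ > r, and set y = (r/‖x‖₁)·x (which satisfies y ∈ P_{rB}(x)). Then the only fixed point of the Mordukhovich differential operator D̂*P_{rB}(x, y) is the zero functional: a bounded sequence φ : ℕ → ℝ satisfies φ ∈ D̂*P_{rB}(x, y)(φ) if and only if φ = 0. -/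
/-!
Perturb `x` in one coordinate, `u = x + t • eᵢ`. In `ℓ¹` the norm is additive on pairs whose
coordinates have matching signs, and for small `t` the coordinates of `u - y` and of `y` do,
because `x - y = (1 - r / ‖x‖) • x` is a positive multiple of `x`. Hence `‖u‖ = ‖u - y‖ + r`,
so `y` is still a nearest point of the ball to `u`. Testing the coderivative inequality on the
pairs `(u, y)` gives `φ i * t ≤ ε * |t|` for all small `t` of either sign, so `φ i = 0`.
-/

open Filter Topology
open scoped ENNReal

lemma lp.norm_add_eq_of_forall_norm_add_eq {α : Type*} {E : α → Type*}
    [∀ i, NormedAddCommGroup (E i)] {f g : lp E 1}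
    (h : ∀ i, ‖f i + g i‖ = ‖f i‖ + ‖g i‖) : ‖f + g‖ = ‖f‖ + ‖g‖ := by
  have hasSum_norm (f : lp E 1) : HasSum (fun i => ‖f i‖) ‖f‖ := by
    simpa using lp.hasSum_norm (by simp) f
  refine (hasSum_norm (f + g)).unique ?_
  simpa only [lp.coeFn_add, Pi.add_apply, h] using (hasSum_norm f).add (hasSum_norm g)

def ballProjection {E : Type*} [SeminormedAddCommGroup E] (r : ℝ) (u : E) : Set E :=
  {v | ‖v‖ ≤ r ∧ ∀ w, ‖w‖ ≤ r → ‖u - v‖ ≤ ‖u - w‖}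

lemma mem_ballProjection_of_norm_sub_add_le {E : Type*} [SeminormedAddCommGroup E]
    {r : ℝ} {u v : E} (hv : ‖v‖ ≤ r) (h : ‖u - v‖ + r ≤ ‖u‖) : v ∈ ballProjection r u :=
  ⟨hv, fun w hw => by linarith [norm_sub_norm_le u w]⟩

lemma smul_mem_ballProjection_add_single {α : Type*} [DecidableEq α] {r : ℝ} (hr : 0 ≤ r)
    {x : lp (fun _ : α => ℝ) 1} (hx : r ≤ ‖x‖) {i : α} {t : ℝ}
    (ht : 0 ≤ x i * ((1 - r / ‖x‖) * x i + t)) :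
    (r / ‖x‖) • x ∈ ballProjection r (x + lp.single 1 i t) := by
  have hscale : 0 ≤ r / ‖x‖ := div_nonneg hr (norm_nonneg x)
  have hc : 0 ≤ 1 - r / ‖x‖ := sub_nonneg.2 (div_le_one_of_le₀ hx (norm_nonneg x))
  have hnorm : ‖(r / ‖x‖) • x‖ = r := by
    rw [norm_smul, Real.norm_of_nonneg hscale,
      div_mul_cancel_of_imp fun h => le_antisymm (h ▸ hx) hr]
  set u := x + lp.single 1 i t
  have hsplit : ‖u‖ = ‖u - (r / ‖x‖) • x‖ + ‖(r / ‖x‖) • x‖ := by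
    conv_lhs => rw [← sub_add_cancel u ((r / ‖x‖) • x)]
    refine lp.norm_add_eq_of_forall_norm_add_eq fun j => ?_
    simp only [Real.norm_eq_abs]
    refine (abs_add_eq_add_abs_iff _ _).2 (mul_nonneg_iff.1 ?_)
    simp only [u, lp.coeFn_sub, lp.coeFn_add, lp.coeFn_smul, Pi.sub_apply, Pi.add_apply,
      Pi.smul_apply, smul_eq_mul, lp.single_apply]
    by_cases hj : j = i
    · subst hj
      rw [Pi.single_eq_same]
      convert mul_nonneg hscale ht using 1
      ring
    · rw [Pi.single_eq_of_ne hj]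
      convert mul_nonneg (mul_nonneg hscale hc) (mul_self_nonneg (x j)) using 1
      ring
  exact mem_ballProjection_of_norm_sub_add_le hnorm.le (by rw [hsplit, hnorm])

lemma tsum_mul_lp_single {α : Type*} [DecidableEq α] {p : ℝ≥0∞} (φ : α → ℝ) (i : α) (t : ℝ) :
    ∑' j, φ j * (lp.single p i t : lp (fun _ : α => ℝ) p) j = φ i * t := by
  rw [tsum_eq_single i fun j hj => by
    rw [lp.single_apply_ne (E := fun _ : α => ℝ) p i t hj, mul_zero], lp.single_apply_self]

lemma eventually_nonneg_mul_mul_add {c : ℝ} (hc : 0 < c) (a : ℝ) :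
    ∀ᶠ t in 𝓝 0, 0 ≤ a * (c * a + t) := by
  rcases eq_or_ne a 0 with rfl | ha
  · simp
  · have hpos : 0 < a * (c * a + 0) := by
      rw [add_zero, mul_left_comm]
      exact mul_pos hc (mul_self_pos.2 ha)
    have hcont : Continuous fun t : ℝ => a * (c * a + t) := by fun_prop
    exact (hcont.continuousAt.eventually (lt_mem_nhds hpos)).mono fun _ h => h.le

lemma eq_zero_of_forall_eventually_mul_le_mul_abs {a : ℝ}
    (h : ∀ ε > 0, ∀ᶠ t in 𝓝 (0 : ℝ), a * t ≤ ε * |t|) : a = 0 := by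
  by_contra ha
  have hlim : Tendsto (fun η : ℝ => η * a) (𝓝[>] 0) (𝓝 0) :=
    tendsto_nhdsWithin_of_tendsto_nhds (by simpa using (continuous_mul_const a).tendsto 0)
  obtain ⟨η, hη : 0 < η, hle⟩ := (eventually_mem_nhdsWithin.and
    (hlim.eventually (h (|a| / 2) (by positivity)))).exists
  have hsq : 0 < η * |a| ^ 2 := by positivity
  rw [abs_mul, abs_of_pos hη] at hle
  nlinarith [sq_abs a]

theorem mordFixedPoint_ball_projection_l1_exterior_general
    (r : ℝ) (hr : 0 < r)
    (x : lp (fun _ : ℕ => ℝ) 1) (hx : r < ‖x‖)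
    (y : lp (fun _ : ℕ => ℝ) 1) (hy : y = (r / ‖x‖) • x)
    (φ : ℕ → ℝ) :
    ((∀ ε > (0 : ℝ), ∃ δ > (0 : ℝ), ∀ u v : lp (fun _ : ℕ => ℝ) 1,
        (‖v‖ ≤ r ∧ ∀ w : lp (fun _ : ℕ => ℝ) 1, ‖w‖ ≤ r → ‖u - v‖ ≤ ‖u - w‖) →
        ‖u - x‖ + ‖v - y‖ < δ →
          (∑' i, φ i * (u - x) i) - (∑' i, φ i * (v - y) i)
            ≤ ε * (‖u - x‖ + ‖v - y‖))
      ↔ φ = 0) := by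
  subst hy
  refine ⟨fun H => funext fun i => ?_, fun hφ ε hε => ⟨1, one_pos, fun u v _ _ => ?_⟩⟩
  · have hc : 0 < 1 - r / ‖x‖ := sub_pos.2 ((div_lt_one (hr.trans hx)).2 hx)
    refine eq_zero_of_forall_eventually_mul_le_mul_abs fun ε hε => ?_
    obtain ⟨δ, hδ, hδH⟩ := H ε hε
    filter_upwards [eventually_nonneg_mul_mul_add hc (x i), eventually_abs_sub_lt 0 hδ]
      with t ht htδ
    have hu : x + lp.single 1 i t - x = lp.single 1 i t := add_sub_cancel_left _ _
    have hnorm : ‖(lp.single 1 i t : lp (fun _ : ℕ => ℝ) 1)‖ = |t| := by simp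
    have hδt : ‖x + lp.single 1 i t - x‖ + ‖(r / ‖x‖) • x - (r / ‖x‖) • x‖ < δ := by
      simpa [hu, hnorm] using htδ
    simpa only [hu, tsum_mul_lp_single, hnorm, sub_self, norm_zero, add_zero, lp.coeFn_zero,
      Pi.zero_apply, mul_zero, tsum_zero, sub_zero] using
      hδH _ _ (smul_mem_ballProjection_add_single hr.le hx.le ht) hδt
  · simp only [hφ, Pi.zero_apply, zero_mul, tsum_zero, sub_zero]
    positivity

/-- Let `ℓ¹` be the real Banach space of absolutely summable sequences
and `P_{rB}` the set-valued metric projection onto the closed ball of radius `r > 0`: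
`v ∈ P_{rB}(u)` iff `‖v‖₁ ≤ r` and `‖u - v‖₁ ≤ ‖u - w‖₁` for all `w` with `‖w‖₁ ≤ r`.
Let `x ∈ ℓ¹` with `‖x‖₁ > r` and `y = (r/‖x‖₁) • x`.  Then the only fixed point of
the Mordukhovich differential operator `D̂*P_{rB}(x, y)` is the zero functional:
a bounded sequence `φ` satisfies `φ ∈ D̂*P_{rB}(x, y)(φ)` iff `φ = 0`. -/
theorem mordFixedPoint_ball_projection_l1_exterior
    (r : ℝ) (hr : 0 < r)
    (x : lp (fun _ : ℕ => ℝ) 1) (hx : r < ‖x‖)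
    (y : lp (fun _ : ℕ => ℝ) 1) (hy : y = (r / ‖x‖) • x)
    (φ : ℕ → ℝ) (hφ : ∃ C : ℝ, ∀ i, |φ i| ≤ C) :
    ((∀ ε > (0 : ℝ), ∃ δ > (0 : ℝ), ∀ u v : lp (fun _ : ℕ => ℝ) 1,
        (‖v‖ ≤ r ∧ ∀ w : lp (fun _ : ℕ => ℝ) 1, ‖w‖ ≤ r → ‖u - v‖ ≤ ‖u - w‖) →
        ‖u - x‖ + ‖v - y‖ < δ →
          (∑' i, φ i * (u - x) i) - (∑' i, φ i * (v - y) i)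
            ≤ ε * (‖u - x‖ + ‖v - y‖))
      ↔ φ = 0) :=
  mordFixedPoint_ball_projection_l1_exterior_general r hr x hx y hy φ
end

section
/- Let n be a positive integer, let C[0,1] be the space of continuous real-valued functions on [0,1] with the maximum norm, let 𝒫_n ⊆ C[0,1] be the set of real polynomials of degree at most n, and let P_{𝒫_n} be the set-valued metric projection onto 𝒫_n (q ∈ P_{𝒫_n}(g) iff q ∈ 𝒫_n and ‖g − q‖ ≤ ‖g − w‖ for all w ∈ 𝒫_n). Let f ∈ C[0,1], let p ∈ P_{𝒫_n}(f), and let μ be a continuous linear functional on C[0,1] with μ(f) ≠ 0. Then for every continuous linear functional γ on C[0,1] that annihilates 𝒫_n (γ(q) = 0 for all q ∈ 𝒫_n), μ does not belong to the Mordukhovich coderivative D̂*P_{𝒫_n}(f, p)(γ); that is, there exists ε > 0 such that for every δ > 0 there exist g ∈ C[0,1] and q ∈ P_{𝒫_n}(g) with ‖g − f‖ + ‖q − p‖ < δ and μ(g − f) − γ(q − p) > ε·(‖g − f‖ + ‖q − p‖). -/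
/-- The subset `𝒫ₙ` of `C[0,1]` consisting of (restrictions of) real polynomials of
degree at most `n`. -/
def polySet (n : ℕ) : Set C(Set.Icc (0 : ℝ) 1, ℝ) :=
  {f | ∃ p : Polynomial ℝ, p.natDegree ≤ n ∧ ∀ t : Set.Icc (0 : ℝ) 1, f t = p.eval ↑t}

/-- `q` is a best approximation of `g` from `𝒫ₙ` in the maximum norm, i.e.
`q ∈ P_{𝒫ₙ}(g)` for the set-valued metric projection `P_{𝒫ₙ}`. -/
def isBestApprox (n : ℕ) (g q : C(Set.Icc (0 : ℝ) 1, ℝ)) : Prop :=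
  q ∈ polySet n ∧ ∀ w ∈ polySet n, ‖g - q‖ ≤ ‖g - w‖

lemma polySet_smul {n : ℕ} (c : ℝ) {h : C(Set.Icc (0 : ℝ) 1, ℝ)}
    (hh : h ∈ polySet n) : c • h ∈ polySet n := by
  obtain ⟨P, hdeg, hev⟩ := hh
  exact ⟨c • P, le_trans (Polynomial.natDegree_smul_le c P) hdeg,
    fun t => by simp [hev t, Polynomial.eval_smul, smul_eq_mul]⟩

/-- Let `f ∈ C[0,1]`, `p ∈ P_{𝒫ₙ}(f)`, and `μ ∈ C*[0,1]` with
`μ(f) ≠ 0`.  Then for every `γ ∈ C*[0,1]` annihilating `𝒫ₙ`, `μ` does not belong to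
the Mordukhovich coderivative `D̂*P_{𝒫ₙ}(f, p)(γ)`: there is `ε > 0` such that for
every `δ > 0` there are `g` and `q ∈ P_{𝒫ₙ}(g)` with `‖g - f‖ + ‖q - p‖ < δ` and
`μ(g - f) - γ(q - p) > ε·(‖g - f‖ + ‖q - p‖)`. -/
theorem mu_not_mem_coderivative_metric_projection_polySet
    (n : ℕ) (hn : 0 < n)
    (f : C(Set.Icc (0 : ℝ) 1, ℝ)) (p : C(Set.Icc (0 : ℝ) 1, ℝ))
    (hp : isBestApprox n f p)
    (μ : C(Set.Icc (0 : ℝ) 1, ℝ) →L[ℝ] ℝ) (hμf : μ f ≠ 0)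
    (γ : C(Set.Icc (0 : ℝ) 1, ℝ) →L[ℝ] ℝ) (hγ : ∀ q ∈ polySet n, γ q = 0) :
    ∃ ε > (0 : ℝ), ∀ δ > (0 : ℝ), ∃ g q : C(Set.Icc (0 : ℝ) 1, ℝ),
      isBestApprox n g q ∧ ‖g - f‖ + ‖q - p‖ < δ ∧
        ε * (‖g - f‖ + ‖q - p‖) < μ (g - f) - γ (q - p) := by
  have hf0 : f ≠ 0 := by rintro rfl; simp at hμf
  have hfn : (0:ℝ) < ‖f‖ := norm_pos_iff.mpr hf0
  set M : ℝ := ‖f‖ + ‖p‖ with hM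
  have hMpos : 0 < M := by positivity
  have hμ : (0:ℝ) < |μ f| := abs_pos.mpr hμf
  refine ⟨|μ f| / (2 * M), by positivity, fun δ hδ => ?_⟩
  set m : ℝ := min (δ / (2 * M)) (1/2) with hm
  have hmpos : 0 < m := lt_min (by positivity) (by norm_num)
  have hmle : m ≤ 1/2 := min_le_right _ _
  set t : ℝ := m * μ f / |μ f| with ht
  have habst : |t| = m := by
    rw [ht, abs_div, abs_mul, abs_abs, abs_of_pos hmpos,
      mul_div_assoc, div_self (ne_of_gt hμ), mul_one]
  have ht1 : (1 : ℝ) + t ≠ 0 := by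
    intro h
    have : t = -1 := by linarith
    rw [this] at habst
    norm_num at habst
    linarith
  refine ⟨(1 + t) • f, (1 + t) • p, ⟨polySet_smul _ hp.1, ?_⟩, ?_, ?_⟩
  · intro w hw
    have hw' : (1 + t)⁻¹ • w ∈ polySet n := polySet_smul _ hw
    have key := hp.2 _ hw'
    have e1 : (1 + t) • f - (1 + t) • p = (1 + t) • (f - p) := (smul_sub _ _ _).symm
    have e2 : (1 + t) • f - w = (1 + t) • (f - (1 + t)⁻¹ • w) := by
      rw [smul_sub, smul_smul, mul_inv_cancel₀ ht1, one_smul]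
    rw [e1, e2, norm_smul (1+t) (f-p), norm_smul (1+t) (f - (1+t)⁻¹ • w)]
    exact mul_le_mul_of_nonneg_left key (norm_nonneg _)
  · have e1 : (1 + t) • f - f = t • f := by
      rw [add_smul, one_smul]; abel
    have e2 : (1 + t) • p - p = t • p := by
      rw [add_smul, one_smul]; abel
    rw [e1, e2, norm_smul t f, norm_smul t p, Real.norm_eq_abs, habst, ← mul_add, ← hM]
    have : m ≤ δ / (2 * M) := min_le_left _ _
    calc m * M ≤ δ / (2 * M) * M := by nlinarith
      _ = δ / 2 := by field_simp
      _ < δ := by linarith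
  · have e1 : (1 + t) • f - f = t • f := by
      rw [add_smul, one_smul]; abel
    have e2 : (1 + t) • p - p = t • p := by
      rw [add_smul, one_smul]; abel
    rw [e1, e2, norm_smul t f, norm_smul t p, Real.norm_eq_abs, habst, ← mul_add, ← hM]
    have hγp : γ (t • p) = 0 := hγ _ (polySet_smul _ hp.1)
    have hμg : μ (t • f) = t * μ f := by simp
    have htμ : t * μ f = m * |μ f| := by
      rw [ht]; field_simp
      rcases abs_cases (μ f) with ⟨h1, _⟩ | ⟨h1, _⟩ <;> rw [h1] <;> ring
    rw [hγp, hμg, htμ, sub_zero]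
    calc |μ f| / (2 * M) * (m * M) = m * |μ f| / 2 := by field_simp
      _ < m * |μ f| := by nlinarith
end
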